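/- arXiv:2104.12978 — 6 statements merged into one kernel-verified Lean document; each statement's English description precedes it below -/
import Mathlib

section
/- An edge-colored finite connected simple graph G on n vertices has a rainbow spanning tree if and only if for every 2 ≤ k ≤ n and every partition of V(G) into k nonempty parts, at least k-1 different colors appear on the edges between partition classes. -/
open Finset
open scoped Classical

/-- The set of non-crossing edges of `G` with respect to a partition `P` of the
vertex set: edges whose two endpoints lie in the same part of `P`. -/
noncomputable def edgesNonCrossing {V : Type} [Fintype V] (G : SimpleGraph V)
    (P : Finpartition (Finset.univ : Finset V)) : Finset (Sym2 V) :=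
  G.edgeFinset.filter (fun e => ∃ p ∈ P.parts, ∀ v ∈ e, v ∈ p)

/-- The set of crossing edges of `G` with respect to a partition `P` of the
vertex set: edges whose endpoints lie in different parts of `P`. -/
noncomputable def edgesCrossing {V : Type} [Fintype V] (G : SimpleGraph V)
    (P : Finpartition (Finset.univ : Finset V)) : Finset (Sym2 V) :=
  G.edgeFinset.filter (fun e => ¬ ∃ p ∈ P.parts, ∀ v ∈ e, v ∈ p)

/-- `G`, edge-colored by `c`, contains `t` pairwise edge-disjoint rainbow
spanning trees. -/
def HasRainbowSpanningTrees {V : Type} [Fintype V] (G : SimpleGraph V)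
    (c : Sym2 V → ℕ) (t : ℕ) : Prop :=
  ∃ T : Fin t → SimpleGraph V,
    (∀ i, T i ≤ G) ∧ (∀ i, (T i).IsTree) ∧
    (∀ i, Set.InjOn c ((T i).edgeSet)) ∧
    (∀ i j, i ≠ j → Disjoint ((T i).edgeSet) ((T j).edgeSet))

/-- The anti-Ramsey number `r(G,t)`: the maximum number of colors in an
edge-coloring of `G` containing no `t` pairwise edge-disjoint rainbow spanning
trees. -/
noncomputable def antiRamsey {V : Type} [Fintype V] (G : SimpleGraph V) (t : ℕ) : ℕ :=
  sSup {m | ∃ c : Sym2 V → ℕ, (G.edgeFinset.image c).card = m ∧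
    ¬ HasRainbowSpanningTrees G c t}

/-- `max_{P : |P| ≥ 3} { |E(P,G)| + t(|P|-2) }`. -/
noncomputable def maxNonCross3 {V : Type} [Fintype V] (G : SimpleGraph V) (t : ℕ) : ℕ :=
  sSup {m | ∃ P : Finpartition (Finset.univ : Finset V), 3 ≤ P.parts.card ∧
    m = (edgesNonCrossing G P).card + t * (P.parts.card - 2)}

/-- `f_G(s)`: the maximum of `|E(P,G)|` over partitions of the vertex set into
exactly `s` parts. -/
noncomputable def fMax {V : Type} [Fintype V] (G : SimpleGraph V) (s : ℕ) : ℕ :=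
  sSup {m | ∃ P : Finpartition (Finset.univ : Finset V), P.parts.card = s ∧
    m = (edgesNonCrossing G P).card}

/-- The number of edges of `G` induced by a set `p` of vertices. -/
noncomputable def edgesWithin {V : Type} [Fintype V] (G : SimpleGraph V) (p : Finset V) : ℕ :=
  (G.edgeFinset.filter (fun e => ∀ v ∈ e, v ∈ p)).card

/-- One splitting step: remove a single vertex from a currently largest part
(measured by the number of non-crossing edges it induces) to form a new
singleton part. -/
def SplitStep {V : Type} [Fintype V] (G : SimpleGraph V)
    (P Q : Finpartition (Finset.univ : Finset V)) : Prop :=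
  ∃ p ∈ P.parts, (∀ q ∈ P.parts, edgesWithin G q ≤ edgesWithin G p) ∧
    ∃ v ∈ p, p.erase v ≠ ∅ ∧
      Q.parts = insert {v} (insert (p.erase v) (P.parts.erase p))

/-!
A rainbow spanning tree forces the condition: contracting the classes of a partition into `k`
classes turns the tree into a connected graph on `k` vertices, so at least `k - 1` tree edges,
all of different colors, cross the partition.

Conversely, if two edges `e ≠ f` share a color, deleting one of them preserves the condition.
Otherwise there are partitions `s` and `t`, both tight (exactly `k - 1` crossing colors), such that
`e` is the only edge of its color crossing `s` and `f` the only one crossing `t`. The colors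
crossing `s ⊓ t` lie in the union of those crossing `s` and `t`, those crossing `s ⊔ t` in the
intersection minus `c e`, and the number of classes is supermodular,
`|s| + |t| ≤ |s ⊓ t| + |s ⊔ t|`; so `s ⊓ t` or `s ⊔ t` violates the condition. Deleting edges
until the coloring is injective leaves a graph that still satisfies the condition, hence is
connected (take the partition into components), and each of its spanning trees is rainbow.
-/

namespace Finset

variable {β γ : Type*} [DecidableEq β] [DecidableEq γ] {X : Finset β} {f : β → γ} {a : β}

theorem card_image_le_card_image_erase_add_one : #(X.image f) ≤ #((X.erase a).image f) + 1 :=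
  calc #(X.image f) ≤ #((insert a (X.erase a)).image f) :=
        card_le_card (image_subset_image (insert_erase_subset a X))
    _ ≤ #((X.erase a).image f) + 1 := by
        rw [image_insert]
        exact card_insert_le _ _

theorem mem_and_eq_of_card_image_erase_lt (h : #((X.erase a).image f) < #(X.image f)) :
    a ∈ X ∧ ∀ b ∈ X, f b = f a → b = a := by
  refine ⟨by_contra fun ha => ?_, fun b hb hfb => ?_⟩
  · rw [erase_eq_of_notMem ha] at h
    exact h.false
  · by_contra hba
    refine h.not_ge (card_le_card fun y hy => ?_)
    obtain ⟨z, hz, rfl⟩ := mem_image.1 hy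
    by_cases hza : z = a
    · exact mem_image.2 ⟨b, mem_erase.2 ⟨hba, hb⟩, hza ▸ hfb⟩
    · exact mem_image_of_mem f (mem_erase.2 ⟨hza, hz⟩)

end Finset

namespace SimpleGraph

variable {V W : Type*} {G : SimpleGraph V}

theorem Reachable.exists_adj_dist_add_one_eq {u v : V} (h : G.Reachable u v)
    (hne : u ≠ v) : ∃ w, G.Adj u w ∧ G.dist w v + 1 = G.dist u v := by
  obtain ⟨p, hp⟩ := h.exists_walk_length_eq_dist
  cases p with
  | nil => exact absurd rfl hne
  | cons hadj q =>
    refine ⟨_, hadj, le_antisymm ?_ ?_⟩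
    · have := dist_le q
      rw [Walk.length_cons] at hp
      omega
    · have := hadj.reachable.dist_triangle_left v
      rwa [dist_eq_one_iff_adj.2 hadj, add_comm] at this

/-- Each vertex other than the chosen root of its component is sent to the edge towards its
parent in a shortest-path tree; this injects `V` into the edges and the components. -/
theorem card_le_card_edgeSet_add_card_connectedComponent [Finite V] (G : SimpleGraph V) :
    Nat.card V ≤ Nat.card G.edgeSet + Nat.card G.ConnectedComponent := by
  let root : V → V := fun v => (G.connectedComponentMk v).out
  have reachable_root : ∀ v, G.Reachable v (root v) := fun v =>
    ConnectedComponent.exact (G.connectedComponentMk v).out_eq.symm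
  choose parent hparent using fun v (hv : v ≠ root v) =>
    (reachable_root v).exists_adj_dist_add_one_eq hv
  let F : V → G.edgeSet ⊕ G.ConnectedComponent := fun v =>
    if hv : v = root v then .inr (G.connectedComponentMk v)
    else .inl ⟨s(v, parent v hv), (hparent v hv).1⟩
  have hF : F.Injective := by
    intro a b hab
    by_cases ha : a = root a <;> by_cases hb : b = root b
    · simp only [F, dif_pos ha, dif_pos hb, Sum.inr.injEq] at hab
      exact ha.trans ((congrArg Quot.out hab).trans hb.symm)
    · simp [F, dif_pos ha, dif_neg hb] at hab
    · simp [F, dif_neg ha, dif_pos hb] at hab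
    · simp only [F, dif_neg ha, dif_neg hb, Sum.inl.injEq] at hab
      rcases Sym2.eq_iff.1 (congrArg Subtype.val hab) with ⟨h, -⟩ | ⟨hab, hba⟩
      · exact h
      have hroot : root a = root b := congrArg Quot.out
        (ConnectedComponent.sound (hba ▸ (hparent a ha).1.reachable))
      have hda := (hparent a ha).2
      have hdb := (hparent b hb).2
      rw [hba, hroot] at hda
      rw [← hab] at hdb
      omega
  calc Nat.card V ≤ Nat.card (G.edgeSet ⊕ G.ConnectedComponent) :=
        Nat.card_le_card_of_injective F hF
    _ = _ := Nat.card_sum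

theorem Connected.map_of_surjective (hG : G.Connected) {f : V → W} (hf : f.Surjective) :
    (G.map f).Connected := by
  have reach : ∀ {u v}, G.Reachable u v → (G.map f).Reachable (f u) (f v) := by
    rintro u v ⟨p⟩
    induction p with
    | nil => rfl
    | @cons a b _ hadj _ ih =>
      by_cases hab : f a = f b
      · rwa [hab]
      · exact (map_adj_apply' hadj hab).reachable.trans ih
  have : Nonempty W := hG.nonempty.map f
  refine ⟨fun x y => ?_⟩
  obtain ⟨u, rfl⟩ := hf x
  obtain ⟨v, rfl⟩ := hf y
  exact reach (hG.preconnected u v)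

end SimpleGraph

namespace Setoid

open SimpleGraph

/-- The bipartite graph on the classes of `s` and of `t`, with one edge for each class of `s ⊓ t`,
has its components indexed by the classes of `s ⊔ t`. -/
theorem card_quotient_add_card_quotient_le {α : Type*} [Finite α] (s t : Setoid α) :
    Nat.card (Quotient s) + Nat.card (Quotient t) ≤
      Nat.card (Quotient (s ⊓ t)) + Nat.card (Quotient (s ⊔ t)) := by
  let edge : Quotient (s ⊓ t) → Sym2 (Quotient s ⊕ Quotient t) :=
    Quotient.lift (fun x => s(.inl ⟦x⟧, .inr ⟦x⟧)) fun x y h => by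
      obtain ⟨hs, ht⟩ := inf_iff_and.1 h
      simp only [Quotient.sound hs, Quotient.sound ht]
  let B := fromEdgeSet (Set.range edge)
  have adj : ∀ x, B.Adj (.inl ⟦x⟧) (.inr ⟦x⟧) := fun x =>
    (fromEdgeSet_adj _).2 ⟨⟨⟦x⟧, rfl⟩, Sum.inl_ne_inr⟩
  have hedges : Nat.card B.edgeSet ≤ Nat.card (Quotient (s ⊓ t)) :=
    (Nat.card_mono (Set.finite_range edge) (by simp [B, edgeSet_fromEdgeSet])).trans
      (Finite.card_range_le edge)
  have hsup : s ⊔ t ≤ comap (fun x => .inl ⟦x⟧) B.reachableSetoid := by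
    refine sup_le (le_def.2 fun h => ?_) (le_def.2 fun {x y} h => ?_) <;> rw [comap_rel]
    · rw [Quotient.sound h]
    · exact (adj x).reachable.trans ((Quotient.sound h ▸ (adj y).reachable.symm :))
  let toComponent : Quotient (s ⊔ t) → B.ConnectedComponent :=
    Quotient.lift (fun x => B.connectedComponentMk (.inl ⟦x⟧)) fun _ _ h =>
      ConnectedComponent.sound (le_def.1 hsup h)
  have hsurj : toComponent.Surjective := by
    rintro ⟨(q | q)⟩ <;> induction q using Quotient.ind with | _ x
    · exact ⟨⟦x⟧, rfl⟩
    · exact ⟨⟦x⟧, ConnectedComponent.sound (adj x).reachable⟩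
  have := B.card_le_card_edgeSet_add_card_connectedComponent
  rw [Nat.card_sum] at this
  have := Nat.card_le_card_of_surjective toComponent hsurj
  omega

end Setoid

namespace SimpleGraph

variable {α κ : Type*} [Fintype α] [DecidableEq κ] (H : SimpleGraph α) (s t : Setoid α)

noncomputable def crossingEdges : Finset (Sym2 α) :=
  H.edgeFinset.filter fun e => ¬ (e.map (Quotient.mk s)).IsDiag

variable {H s t} {c : Sym2 α → κ}

@[simp]
theorem mem_crossingEdges {x y : α} : s(x, y) ∈ H.crossingEdges s ↔ H.Adj x y ∧ ¬ s x y := by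
  simp [crossingEdges, Quotient.eq]

theorem crossingEdges_subset_edgeSet : (H.crossingEdges s : Set (Sym2 α)) ⊆ H.edgeSet :=
  fun _ he => mem_edgeFinset.1 (mem_filter.1 he).1

theorem crossingEdges_mono {H' : SimpleGraph α} (h : H ≤ H') :
    H.crossingEdges s ⊆ H'.crossingEdges s :=
  filter_subset_filter _ (edgeFinset_mono h)

theorem crossingEdges_anti (h : s ≤ t) : H.crossingEdges t ⊆ H.crossingEdges s := by
  intro e
  induction e using Sym2.ind
  simp only [mem_crossingEdges, and_imp]
  exact fun hadj hst => ⟨hadj, fun hs => hst (Setoid.le_def.1 h hs)⟩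

theorem crossingEdges_inf : H.crossingEdges (s ⊓ t) = H.crossingEdges s ∪ H.crossingEdges t := by
  ext e
  induction e using Sym2.ind with | _ x y
  have := Setoid.inf_iff_and (r := s) (s := t) (x := x) (y := y)
  simp only [mem_crossingEdges, mem_union]
  tauto

theorem crossingEdges_deleteEdges (e : Sym2 α) :
    (H.deleteEdges {e}).crossingEdges s = (H.crossingEdges s).erase e := by
  ext e'
  induction e' using Sym2.ind
  simp only [mem_crossingEdges, deleteEdges_adj, Set.mem_singleton_iff, mem_erase]
  tauto

theorem card_edgeSet_map_le_card_crossingEdges :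
    Nat.card (H.map (Quotient.mk s)).edgeSet ≤ #(H.crossingEdges s) := by
  have hsub : (H.map (Quotient.mk s)).edgeSet ⊆ Sym2.map (Quotient.mk s) '' H.crossingEdges s := by
    intro e
    induction e using Sym2.ind
    rintro ⟨hne, x, y, hadj, rfl, rfl⟩
    exact ⟨s(x, y), mem_crossingEdges.2 ⟨hadj, fun h => hne (Quotient.sound h)⟩, rfl⟩
  rw [← Nat.card_eq_finsetCard]
  exact (Nat.card_mono ((finite_toSet _).image _) hsub).trans (Nat.card_image_le (finite_toSet _))

theorem Connected.card_quotient_le_card_crossingEdges_add_one (hH : H.Connected) (s : Setoid α) :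
    Nat.card (Quotient s) ≤ #(H.crossingEdges s) + 1 :=
  (hH.map_of_surjective Quotient.mk_surjective).card_vert_le_card_edgeSet_add_one.trans
    (Nat.add_le_add_right card_edgeSet_map_le_card_crossingEdges 1)

theorem card_quotient_le_card_image_crossingEdges_add_one {T : SimpleGraph α} (hTH : T ≤ H)
    (hT : T.Connected) (hc : Set.InjOn c T.edgeSet) (s : Setoid α) :
    Nat.card (Quotient s) ≤ #((H.crossingEdges s).image c) + 1 := calc
  Nat.card (Quotient s) ≤ #(T.crossingEdges s) + 1 :=
    hT.card_quotient_le_card_crossingEdges_add_one s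
  _ = #((T.crossingEdges s).image c) + 1 := by
    rw [card_image_of_injOn (hc.mono crossingEdges_subset_edgeSet)]
  _ ≤ #((H.crossingEdges s).image c) + 1 := by
    gcongr
    exact crossingEdges_mono hTH

def CrossingColorCondition (H : SimpleGraph α) (c : Sym2 α → κ) : Prop :=
  ∀ s : Setoid α, Nat.card (Quotient s) ≤ #((H.crossingEdges s).image c) + 1

namespace CrossingColorCondition

theorem connected [Nonempty α] (hH : H.CrossingColorCondition c) : H.Connected := by
  have hempty : H.crossingEdges H.reachableSetoid = ∅ := by
    ext e
    induction e using Sym2.ind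
    simpa using fun h => h.reachable
  have hcard := hH H.reachableSetoid
  rw [hempty, image_empty, card_empty] at hcard
  have := Finite.card_le_one_iff_subsingleton.1 hcard
  exact ⟨fun u v => Quotient.exact (Subsingleton.elim (⟦u⟧ : Quotient H.reachableSetoid) ⟦v⟧)⟩

theorem tight_of_deleteEdges (hH : H.CrossingColorCondition c) {s : Setoid α} {e : Sym2 α}
    (hs : #(((H.deleteEdges {e}).crossingEdges s).image c) + 1 < Nat.card (Quotient s)) :
    Nat.card (Quotient s) = #((H.crossingEdges s).image c) + 1 ∧
      e ∈ H.crossingEdges s ∧ ∀ g ∈ H.crossingEdges s, c g = c e → g = e := by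
  rw [crossingEdges_deleteEdges] at hs
  have := hH s
  have := card_image_le_card_image_erase_add_one (X := H.crossingEdges s) (f := c) (a := e)
  exact ⟨by omega, mem_and_eq_of_card_image_erase_lt (by omega)⟩

theorem deleteEdges_or (hH : H.CrossingColorCondition c) {e f : Sym2 α} (hef : e ≠ f)
    (hc : c e = c f) :
    (H.deleteEdges {e}).CrossingColorCondition c ∨
      (H.deleteEdges {f}).CrossingColorCondition c := by
  by_contra h
  simp only [CrossingColorCondition, not_or, not_forall, not_le] at h
  obtain ⟨⟨s, hs⟩, ⟨t, ht⟩⟩ := h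
  obtain ⟨hs_card, he_s, he_unique⟩ := hH.tight_of_deleteEdges hs
  obtain ⟨ht_card, hf_t, hf_unique⟩ := hH.tight_of_deleteEdges ht
  set A := (H.crossingEdges s).image c
  set B := (H.crossingEdges t).image c
  have he_t : e ∉ H.crossingEdges t := fun he => hef (hf_unique e he hc)
  have hce : c e ∈ A ∩ B := mem_inter.2 ⟨mem_image_of_mem c he_s, hc ▸ mem_image_of_mem c hf_t⟩
  have h_inf : (H.crossingEdges (s ⊓ t)).image c ⊆ A ∪ B := by
    rw [crossingEdges_inf, image_union]
  have h_sup : (H.crossingEdges (s ⊔ t)).image c ⊆ (A ∩ B).erase (c e) := by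
    intro x hx
    obtain ⟨g, hg, rfl⟩ := mem_image.1 hx
    have hg_s := crossingEdges_anti le_sup_left hg
    have hg_t := crossingEdges_anti le_sup_right hg
    refine mem_erase.2 ⟨fun hge => he_t (he_unique g hg_s hge ▸ hg_t), ?_⟩
    exact mem_inter.2 ⟨mem_image_of_mem c hg_s, mem_image_of_mem c hg_t⟩
  have h_inf_card := card_le_card h_inf
  have h_sup_card := card_le_card h_sup
  rw [card_erase_of_mem hce] at h_sup_card
  have := card_pos.2 ⟨_, hce⟩
  have := card_union_add_card_inter A B
  have := Setoid.card_quotient_add_card_quotient_le s t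
  have := hH (s ⊓ t)
  have := hH (s ⊔ t)
  omega

theorem exists_isTree_le_injOn [Nonempty α] (hH : H.CrossingColorCondition c) :
    ∃ T ≤ H, T.IsTree ∧ Set.InjOn c T.edgeSet := by
  have := Finite.to_wellFoundedLT (α := SimpleGraph α)
  induction H using WellFoundedLT.induction with | _ H ih
  by_cases hinj : Set.InjOn c H.edgeSet
  · obtain ⟨T, hTH, hT⟩ := hH.connected.exists_isTree_le
    exact ⟨T, hTH, hT, hinj.mono (edgeSet_mono hTH)⟩
  obtain ⟨e, he, f, hf, hc, hef⟩ : ∃ e ∈ H.edgeSet, ∃ f ∈ H.edgeSet, c e = c f ∧ e ≠ f := by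
    simpa [Set.InjOn] using hinj
  have descend : ∀ g ∈ H.edgeSet, (H.deleteEdges {g}).CrossingColorCondition c →
      ∃ T ≤ H, T.IsTree ∧ Set.InjOn c T.edgeSet := by
    intro g hg hg_cond
    have hlt : H.deleteEdges {g} < H :=
      (deleteEdges_le _).lt_of_ne fun h => by
        rw [← h] at hg
        simp at hg
    obtain ⟨T, hT, hT_tree, hT_inj⟩ := ih _ hlt hg_cond
    exact ⟨T, hT.trans (deleteEdges_le _), hT_tree, hT_inj⟩
  rcases hH.deleteEdges_or hef hc with h | h
  · exact descend e he h
  · exact descend f hf h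

end CrossingColorCondition

end SimpleGraph

namespace Finpartition

variable {α : Type*} [Fintype α] [DecidableEq α]

theorem card_quotient_ker_part (P : Finpartition (univ : Finset α)) :
    Nat.card (Quotient (Setoid.ker P.part)) = #P.parts := by
  have hrange : Set.range P.part = P.parts := by
    ext p
    refine ⟨?_, fun hp => ?_⟩
    · rintro ⟨x, rfl⟩
      exact P.part_mem.2 (mem_univ x)
    · obtain ⟨x, -, hx⟩ := P.part_surjOn hp
      exact ⟨x, hx⟩
  rw [Nat.card_congr (Setoid.quotientKerEquivRange P.part), hrange, Nat.card_coe_set_eq,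
    Set.ncard_coe_finset]

theorem ker_part_ofSetoid (s : Setoid α) [DecidableRel s.r] :
    Setoid.ker (ofSetoid s).part = s := by
  ext x y
  rw [Setoid.ker_def, ← mem_part_iff_part_eq_part _ (mem_univ x) (mem_univ y),
    mem_part_ofSetoid_iff_rel]
  exact s.comm'

end Finpartition

theorem edgesCrossing_eq_crossingEdges_ker {V : Type} [Fintype V] (G : SimpleGraph V)
    (P : Finpartition (univ : Finset V)) :
    edgesCrossing G P = G.crossingEdges (Setoid.ker P.part) := by
  ext e
  induction e using Sym2.ind with | _ x y
  rw [edgesCrossing, mem_filter, SimpleGraph.mem_crossingEdges, SimpleGraph.mem_edgeFinset,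
    SimpleGraph.mem_edgeSet, Setoid.ker_def,
    ← P.mem_part_iff_part_eq_part (mem_univ x) (mem_univ y), P.mem_part_iff_exists]
  simp only [Sym2.mem_iff, forall_eq_or_imp, forall_eq]

/-- An edge-colored finite connected simple graph `G` on `n`
vertices has a rainbow spanning tree iff for every `2 ≤ k ≤ n` and every
partition of `V(G)` into `k` parts, at least `k-1` colors appear on the
crossing edges. -/
theorem stmt5 {V : Type} [Fintype V] (G : SimpleGraph V) (hG : G.Connected)
    (c : Sym2 V → ℕ) :
    (∃ T : SimpleGraph V, T ≤ G ∧ T.IsTree ∧ Set.InjOn c T.edgeSet) ↔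
      ∀ k, 2 ≤ k → k ≤ Fintype.card V →
        ∀ P : Finpartition (Finset.univ : Finset V), P.parts.card = k →
          k - 1 ≤ ((edgesCrossing G P).image c).card := by
  constructor
  · rintro ⟨T, hTG, hT, hc⟩ k - - P rfl
    have := SimpleGraph.card_quotient_le_card_image_crossingEdges_add_one hTG hT.connected hc
      (Setoid.ker P.part)
    rw [P.card_quotient_ker_part, ← edgesCrossing_eq_crossingEdges_ker] at this
    omega
  · intro h
    have := hG.nonempty
    refine SimpleGraph.CrossingColorCondition.exists_isTree_le_injOn fun s => ?_
    rw [← Finpartition.ker_part_ofSetoid s, Finpartition.card_quotient_ker_part,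
      ← edgesCrossing_eq_crossingEdges_ker]
    set P := Finpartition.ofSetoid s
    by_cases hk : 2 ≤ #P.parts
    · have := h _ hk (P.card_parts_le_card.trans_eq card_univ) P rfl
      omega
    · omega
end

section
/- Let G be a finite simple graph and t a positive integer such that for every partition P of V(G), the number of crossing edges satisfies |cr(P,G)| ≥ t(|P| - 1). Then for every partition P of V(G) with |P| ≥ 3, the anti-Ramsey number satisfies r(G,t) ≥ |E(P,G)| + t(|P| - 2). -/
open Finset
open scoped Classical

/-!
Fix `P` with `|P| ≥ 3`. Give the non-crossing edges and a set `D` of `t(|P| - 2) - 1` crossing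
edges pairwise distinct colors, and all remaining edges (there is one, as
`|cr(P,G)| ≥ t(|P| - 1)`) a single further color. Contracting the parts of `P` turns a spanning
tree into a connected graph on `|P|` vertices, so the tree has at least `|P| - 1` crossing edges;
if it is rainbow, at most one of them lies outside `D`. Hence `t` edge-disjoint rainbow spanning
trees would use `t(|P| - 2) > |D|` edges of `D`.
-/

namespace SimpleGraph

variable {V : Type} [Fintype V]

noncomputable def partOf (P : Finpartition (Finset.univ : Finset V)) (a : V) : P.parts :=
  ⟨P.part a, P.part_mem.2 (mem_univ a)⟩

lemma partOf_surjective (P : Finpartition (Finset.univ : Finset V)) :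
    Function.Surjective (partOf P) := by
  rintro ⟨p, hp⟩
  obtain ⟨a, ha⟩ := P.nonempty_of_mem_parts hp
  exact ⟨a, Subtype.ext (P.part_eq_of_mem hp ha)⟩

lemma mem_edgesCrossing_iff (G : SimpleGraph V) (P : Finpartition (Finset.univ : Finset V))
    (a b : V) : s(a, b) ∈ edgesCrossing G P ↔ G.Adj a b ∧ partOf P a ≠ partOf P b := by
  have hsame : (∃ p ∈ P.parts, ∀ v ∈ s(a, b), v ∈ p) ↔ P.part a = P.part b := by
    simp only [Sym2.mem_iff, forall_eq_or_imp, forall_eq, ← P.mem_part_iff_exists,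
      P.mem_part_iff_part_eq_part (mem_univ a) (mem_univ b)]
  simp only [edgesCrossing, mem_filter, mem_edgeFinset, mem_edgeSet, hsame, partOf, ne_eq,
    Subtype.mk.injEq]

noncomputable def quotientGraph (T : SimpleGraph V) (P : Finpartition (Finset.univ : Finset V)) :
    SimpleGraph P.parts :=
  fromEdgeSet (Sym2.map (partOf P) '' T.edgeSet)

lemma Connected.quotientGraph {T : SimpleGraph V} (hT : T.Connected)
    (P : Finpartition (Finset.univ : Finset V)) : (T.quotientGraph P).Connected := by
  have hreach : ∀ a b, T.Reachable a b →
      (T.quotientGraph P).Reachable (partOf P a) (partOf P b) := by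
    intro a b hab
    rw [reachable_iff_reflTransGen] at hab ⊢
    refine Relation.ReflTransGen.lift' (partOf P) (fun x y hxy => ?_) a b hab
    by_cases hxy' : partOf P x = partOf P y
    · simp only [Function.onFun, hxy']
      exact Relation.ReflTransGen.refl
    · exact Relation.ReflTransGen.single ((fromEdgeSet_adj _).2 ⟨⟨s(x, y), hxy, rfl⟩, hxy'⟩)
  rw [connected_iff]
  refine ⟨fun p q => ?_, ⟨partOf P hT.nonempty.some⟩⟩
  obtain ⟨a, rfl⟩ := partOf_surjective P p
  obtain ⟨b, rfl⟩ := partOf_surjective P q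
  exact hreach a b (hT.preconnected a b)

lemma card_edgeFinset_quotientGraph_le (T : SimpleGraph V)
    (P : Finpartition (Finset.univ : Finset V)) :
    (T.quotientGraph P).edgeFinset.card ≤ (edgesCrossing T P).card := by
  refine card_le_card_of_surjOn (Sym2.map (partOf P)) ?_
  rintro e he
  rw [coe_edgeFinset, quotientGraph, edgeSet_fromEdgeSet] at he
  obtain ⟨⟨e', he', rfl⟩, hdiag⟩ := he
  induction e' using Sym2.ind with
  | _ a b =>
    refine ⟨s(a, b), (mem_edgesCrossing_iff T P a b).2 ⟨he', ?_⟩, rfl⟩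
    simpa using hdiag

lemma Connected.card_parts_le_card_edgesCrossing_add_one {T : SimpleGraph V}
    (hT : T.Connected) (P : Finpartition (Finset.univ : Finset V)) :
    P.parts.card ≤ (edgesCrossing T P).card + 1 := by
  have h := (hT.quotientGraph P).card_vert_le_card_edgeSet_add_one
  rw [Nat.card_eq_fintype_card, Fintype.card_coe, Nat.card_eq_fintype_card,
    ← edgeFinset_card] at h
  exact h.trans (Nat.add_le_add_right (card_edgeFinset_quotientGraph_le T P) 1)

end SimpleGraph

section Coloring

variable {V : Type} [Fintype V]

noncomputable def collapseColoring (S : Finset (Sym2 V)) (e : Sym2 V) : ℕ :=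
  if e ∈ S then Fintype.equivFin (Sym2 V) e + 1 else 0

lemma collapseColoring_of_notMem {S : Finset (Sym2 V)} {e : Sym2 V} (he : e ∉ S) :
    collapseColoring S e = 0 :=
  if_neg he

lemma collapseColoring_ne_zero {S : Finset (Sym2 V)} {e : Sym2 V} (he : e ∈ S) :
    collapseColoring S e ≠ 0 := by
  simp [collapseColoring, he]

lemma injOn_collapseColoring (S : Finset (Sym2 V)) : Set.InjOn (collapseColoring S) S := by
  intro e he f hf hef
  simp only [collapseColoring, mem_coe.1 he, mem_coe.1 hf, if_true, Nat.add_right_cancel_iff,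
    Fin.val_inj, EmbeddingLike.apply_eq_iff_eq] at hef
  exact hef

lemma card_image_collapseColoring {S E : Finset (Sym2 V)} (hSE : S ⊂ E) :
    (E.image (collapseColoring S)).card = S.card + 1 := by
  obtain ⟨e₀, he₀E, he₀S⟩ := exists_of_ssubset hSE
  have himage : E.image (collapseColoring S) = insert 0 (S.image (collapseColoring S)) := by
    ext k
    simp only [mem_image, mem_insert]
    constructor
    · rintro ⟨e, he, rfl⟩
      by_cases heS : e ∈ S
      · exact Or.inr ⟨e, heS, rfl⟩
      · exact Or.inl (collapseColoring_of_notMem heS)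
    · rintro (rfl | ⟨e, he, rfl⟩)
      · exact ⟨e₀, he₀E, collapseColoring_of_notMem he₀S⟩
      · exact ⟨e, hSE.subset he, rfl⟩
  have hzero : 0 ∉ S.image (collapseColoring S) := by
    simp only [mem_image, not_exists, not_and]
    exact fun e he => collapseColoring_ne_zero he
  rw [himage, card_insert_of_notMem hzero, card_image_of_injOn (injOn_collapseColoring S)]

lemma card_sdiff_le_one_of_injOn_collapseColoring {S E : Finset (Sym2 V)}
    (hE : Set.InjOn (collapseColoring S) E) : (E \ S).card ≤ 1 := by
  refine card_le_one.2 fun e he f hf => hE (mem_sdiff.1 he).1 (mem_sdiff.1 hf).1 ?_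
  rw [collapseColoring_of_notMem (mem_sdiff.1 he).2, collapseColoring_of_notMem (mem_sdiff.1 hf).2]

end Coloring

section AntiRamsey

variable {V : Type} [Fintype V]

lemma edgesCrossing_mono {T G : SimpleGraph V} (hTG : T ≤ G)
    (P : Finpartition (Finset.univ : Finset V)) : edgesCrossing T P ⊆ edgesCrossing G P :=
  filter_subset_filter _ (SimpleGraph.edgeFinset_mono hTG)

lemma card_edgesNonCrossing_add_card_edgesCrossing (G : SimpleGraph V)
    (P : Finpartition (Finset.univ : Finset V)) :
    (edgesNonCrossing G P).card + (edgesCrossing G P).card = G.edgeFinset.card :=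
  card_filter_add_card_filter_not _

lemma disjoint_edgesNonCrossing_edgesCrossing (G : SimpleGraph V)
    (P : Finpartition (Finset.univ : Finset V)) :
    Disjoint (edgesNonCrossing G P) (edgesCrossing G P) :=
  disjoint_filter_filter_not _ _ _

lemma le_antiRamsey {G : SimpleGraph V} {t : ℕ} {c : Sym2 V → ℕ}
    (hc : ¬ HasRainbowSpanningTrees G c t) : (G.edgeFinset.image c).card ≤ antiRamsey G t :=
  le_csSup ⟨G.edgeFinset.card, fun _ ⟨_, hm, _⟩ => hm ▸ card_image_le⟩ ⟨c, rfl, hc⟩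

lemma card_parts_sub_two_le_card_edgesCrossing_inter {T : SimpleGraph V} (hT : T.Connected)
    {S : Finset (Sym2 V)} (hrainbow : Set.InjOn (collapseColoring S) T.edgeSet)
    (P : Finpartition (Finset.univ : Finset V)) :
    P.parts.card - 2 ≤ (edgesCrossing T P ∩ S).card := by
  have hparts := hT.card_parts_le_card_edgesCrossing_add_one P
  have houtside : (edgesCrossing T P \ S).card ≤ 1 := by
    refine (card_le_card (sdiff_subset_sdiff (filter_subset _ _) subset_rfl)).trans ?_
    exact card_sdiff_le_one_of_injOn_collapseColoring (by rwa [SimpleGraph.coe_edgeFinset])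
  have := card_inter_add_card_sdiff (edgesCrossing T P) S
  omega

lemma not_hasRainbowSpanningTrees_collapseColoring {G : SimpleGraph V} {t : ℕ}
    {S : Finset (Sym2 V)} (P : Finpartition (Finset.univ : Finset V))
    (hS : (edgesCrossing G P ∩ S).card < t * (P.parts.card - 2)) :
    ¬ HasRainbowSpanningTrees G (collapseColoring S) t := by
  rintro ⟨T, hTG, hT, hrainbow, hdisj⟩
  have hpairwise : (↑(univ : Finset (Fin t)) : Set (Fin t)).PairwiseDisjoint
      (fun i => edgesCrossing (T i) P ∩ S) := by
    intro i _ j _ hij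
    refine Disjoint.mono (inter_subset_left.trans (filter_subset _ _))
      (inter_subset_left.trans (filter_subset _ _)) ?_
    rw [← disjoint_coe, SimpleGraph.coe_edgeFinset, SimpleGraph.coe_edgeFinset]
    exact hdisj i j hij
  have hunion : (univ.biUnion fun i => edgesCrossing (T i) P ∩ S) ⊆ edgesCrossing G P ∩ S :=
    biUnion_subset.2 fun i _ => inter_subset_inter_right (edgesCrossing_mono (hTG i) P)
  have := calc
    t * (P.parts.card - 2) ≤ ∑ i, (edgesCrossing (T i) P ∩ S).card := by
      simpa using sum_le_sum fun i (_ : i ∈ univ) =>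
        card_parts_sub_two_le_card_edgesCrossing_inter (hT i).connected (hrainbow i) P
    _ = (univ.biUnion fun i => edgesCrossing (T i) P ∩ S).card := (card_biUnion hpairwise).symm
    _ ≤ (edgesCrossing G P ∩ S).card := card_le_card hunion
  omega

end AntiRamsey

/-- (Lower bound.) If every partition `P` of `V(G)` satisfies
`|cr(P,G)| ≥ t(|P|-1)`, then for every partition `P` with `|P| ≥ 3`,
`r(G,t) ≥ |E(P,G)| + t(|P|-2)`. -/
theorem stmt8 {V : Type} [Fintype V] (G : SimpleGraph V) (t : ℕ) (ht : 0 < t)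
    (h : ∀ P : Finpartition (Finset.univ : Finset V),
      t * (P.parts.card - 1) ≤ (edgesCrossing G P).card) :
    ∀ P : Finpartition (Finset.univ : Finset V), 3 ≤ P.parts.card →
      (edgesNonCrossing G P).card + t * (P.parts.card - 2) ≤ antiRamsey G t := by
  intro P hP
  have hpos : 0 < t * (P.parts.card - 2) := Nat.mul_pos ht (by omega)
  have hcrossing : t * (P.parts.card - 2) ≤ (edgesCrossing G P).card :=
    (Nat.mul_le_mul_left t (by omega)).trans (h P)
  obtain ⟨D, hD, hDcard⟩ := exists_subset_card_eq (s := edgesCrossing G P)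
    (n := t * (P.parts.card - 2) - 1) (by omega)
  have hdisj := (disjoint_edgesNonCrossing_edgesCrossing G P).mono_right hD
  have hSD : edgesCrossing G P ∩ (edgesNonCrossing G P ∪ D) = D := by
    rw [inter_union_distrib_left,
      disjoint_iff_inter_eq_empty.1 (disjoint_edgesNonCrossing_edgesCrossing G P).symm,
      empty_union, inter_eq_right.2 hD]
  have hS : edgesNonCrossing G P ∪ D ⊂ G.edgeFinset := by
    refine ssubset_of_subset_of_ne (union_subset (filter_subset _ _) (hD.trans (filter_subset _ _)))
      fun heq => ?_
    have := card_edgesNonCrossing_add_card_edgesCrossing G P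
    rw [← heq, card_union_of_disjoint hdisj] at this
    omega
  calc (edgesNonCrossing G P).card + t * (P.parts.card - 2)
      = (G.edgeFinset.image (collapseColoring (edgesNonCrossing G P ∪ D))).card := by
        rw [card_image_collapseColoring hS, card_union_of_disjoint hdisj]
        omega
    _ ≤ antiRamsey G t :=
        le_antiRamsey (not_hasRainbowSpanningTrees_collapseColoring P (by rw [hSD]; omega))
end

section
/- Let G be a finite simple graph on at least 3 vertices, t a positive integer, and fix an edge-coloring of G using at least max_{P: |P|≥3}{ |E(P,G)| + t(|P|-2) } + 1 colors, where the maximum runs over all partitions P of V(G) with at least 3 parts. For any partition P define η(P,G) = |E(P,G)| - |c(E(P,G))| and ξ(P,G) = |c(E(P,G)) ∩ c(cr(P,G))|. Then: (1) for every partition P of V(G) with |P| ≥ 3, |c(cr(P,G))| ≥ t(|P|-2) + η(P,G) + ξ(P,G) + 1; and (2) for every partition P with |P| = 2 such that |c(E(G))| > |E(P,G)|, we have |c(cr(P,G))| ≥ η(P,G) + ξ(P,G) + 1. -/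
/-!
The colors on `E(G)` are those on `E(P,G)` together with those on `cr(P,G)`, so by
inclusion–exclusion `|c(E(G))| + ξ(P,G) = |c(E(P,G))| + |c(cr(P,G))|`, while
`|c(E(P,G))| = |E(P,G)| - η(P,G)`. Hence any bound `|c(E(G))| > |E(P,G)| + k` turns into
`|c(cr(P,G))| ≥ k + η(P,G) + ξ(P,G) + 1`; for `|P| ≥ 3` the color hypothesis supplies it
with `k = t(|P|-2)`, and for `|P| = 2` it is assumed with `k = 0`.
-/

open Finset
open scoped Classical

section Partition

variable {V : Type} [Fintype V] (G : SimpleGraph V) (P : Finpartition (Finset.univ : Finset V))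

theorem edgesNonCrossing_union_edgesCrossing :
    edgesNonCrossing G P ∪ edgesCrossing G P = G.edgeFinset :=
  filter_union_filter_not_eq _ _

theorem card_image_edgeFinset_add_card_inter (c : Sym2 V → ℕ) :
    (G.edgeFinset.image c).card
        + (((edgesNonCrossing G P).image c) ∩ ((edgesCrossing G P).image c)).card
      = ((edgesNonCrossing G P).image c).card + ((edgesCrossing G P).image c).card := by
  rw [← edgesNonCrossing_union_edgesCrossing G P, image_union, card_union_add_card_inter]

theorem le_card_image_edgesCrossing_of_lt (c : Sym2 V → ℕ) (k : ℕ)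
    (h : (edgesNonCrossing G P).card + k < (G.edgeFinset.image c).card) :
    k + ((edgesNonCrossing G P).card - ((edgesNonCrossing G P).image c).card)
        + (((edgesNonCrossing G P).image c) ∩ ((edgesCrossing G P).image c)).card + 1
      ≤ ((edgesCrossing G P).image c).card := by
  have hcolors := card_image_edgeFinset_add_card_inter G P c
  have himage : ((edgesNonCrossing G P).image c).card ≤ (edgesNonCrossing G P).card :=
    card_image_le
  omega

theorem le_maxNonCross3 (t : ℕ) (hP : 3 ≤ P.parts.card) :
    (edgesNonCrossing G P).card + t * (P.parts.card - 2) ≤ maxNonCross3 G t := by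
  refine le_csSup ⟨G.edgeFinset.card + t * Fintype.card V, ?_⟩ ⟨P, hP, rfl⟩
  rintro m ⟨Q, -, rfl⟩
  have hedges : (edgesNonCrossing G Q).card ≤ G.edgeFinset.card := card_filter_le _ _
  have hparts : Q.parts.card - 2 ≤ Fintype.card V :=
    (Nat.sub_le _ _).trans (Q.card_parts_le_card.trans_eq card_univ)
  exact add_le_add hedges (Nat.mul_le_mul_left t hparts)

end Partition

theorem stmt10_general {V : Type} [Fintype V] (G : SimpleGraph V) (t : ℕ) (c : Sym2 V → ℕ)
    (hc : maxNonCross3 G t + 1 ≤ (G.edgeFinset.image c).card) :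
    (∀ P : Finpartition (Finset.univ : Finset V), 3 ≤ P.parts.card →
      t * (P.parts.card - 2)
          + ((edgesNonCrossing G P).card - ((edgesNonCrossing G P).image c).card)
          + (((edgesNonCrossing G P).image c) ∩ ((edgesCrossing G P).image c)).card + 1
        ≤ ((edgesCrossing G P).image c).card) ∧
    (∀ P : Finpartition (Finset.univ : Finset V), P.parts.card = 2 →
      (edgesNonCrossing G P).card < (G.edgeFinset.image c).card →
      ((edgesNonCrossing G P).card - ((edgesNonCrossing G P).image c).card)
          + (((edgesNonCrossing G P).image c) ∩ ((edgesCrossing G P).image c)).card + 1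
        ≤ ((edgesCrossing G P).image c).card) := by
  refine ⟨fun P hP => ?_, fun P _ hlt => ?_⟩
  · exact le_card_image_edgesCrossing_of_lt G P c _
      ((le_maxNonCross3 G P t hP).trans_lt (Nat.lt_of_succ_le hc))
  · simpa using le_card_image_edgesCrossing_of_lt G P c 0 hlt

/-- If `G` is edge-colored with at least
`max_{P : |P| ≥ 3}{|E(P,G)| + t(|P|-2)} + 1` colors, then for every partition
`P` with `|P| ≥ 3`, `|c(cr(P,G))| ≥ t(|P|-2) + η(P,G) + ξ(P,G) + 1`, and for
every bipartition `P` with `|c(E(G))| > |E(P,G)|`,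
`|c(cr(P,G))| ≥ η(P,G) + ξ(P,G) + 1`. -/
theorem stmt10 {V : Type} [Fintype V] (G : SimpleGraph V) (t : ℕ) (ht : 0 < t)
    (hV : 3 ≤ Fintype.card V) (c : Sym2 V → ℕ)
    (hc : maxNonCross3 G t + 1 ≤ (G.edgeFinset.image c).card) :
    (∀ P : Finpartition (Finset.univ : Finset V), 3 ≤ P.parts.card →
      t * (P.parts.card - 2)
          + ((edgesNonCrossing G P).card - ((edgesNonCrossing G P).image c).card)
          + (((edgesNonCrossing G P).image c) ∩ ((edgesCrossing G P).image c)).card + 1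
        ≤ ((edgesCrossing G P).image c).card) ∧
    (∀ P : Finpartition (Finset.univ : Finset V), P.parts.card = 2 →
      (edgesNonCrossing G P).card < (G.edgeFinset.image c).card →
      ((edgesNonCrossing G P).card - ((edgesNonCrossing G P).image c).card)
          + (((edgesNonCrossing G P).image c) ∩ ((edgesCrossing G P).image c)).card + 1
        ≤ ((edgesCrossing G P).image c).card) :=
  stmt10_general G t c hc
end

section
/- Let G be a finite simple graph on at least 3 vertices, t a positive integer, and suppose G is edge-colored with exactly max_{P: |P|≥3}{ |E(P,G)| + t(|P|-2) } + 1 colors and contains no t pairwise edge-disjoint rainbow spanning trees. If there exist two distinct bipartitions P₁ and P₂ of V(G) (each with exactly 2 parts) with |cr(P₁,G)| = |cr(P₂,G)| = t, then the common refinement P₁ ∩ P₂ (which has at least 3 parts) satisfies |cr(P₁∩P₂, G)| ≤ t(|P₁∩P₂| - 1). Consequently, under the additional hypothesis that every partition P with |P| ≥ 3 satisfies |cr(P,G)| ≥ t(|P|-1)+1, at most one bipartition P of V(G) can have |cr(P,G)| = t. -/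
open Finset
open scoped Classical

/-!
Every crossing edge of the common refinement `P₁ ⊓ P₂` crosses `P₁` or `P₂`, so there are at most
`2t` of them. Two distinct bipartitions cannot refine one another, hence `P₁ ⊓ P₂` is a strict
refinement of `P₁` and has at least `3` parts, which makes `2t ≤ t(|P₁ ⊓ P₂| - 1)`. The second
claim follows because this bound contradicts `|cr(P,G)| ≥ t(|P|-1)+1` for `P = P₁ ⊓ P₂`.
-/

namespace Finpartition

variable {α : Type*} [DecidableEq α] {s : Finset α}

theorem eq_of_le_of_card_parts_le {P Q : Finpartition s} (hle : Q ≤ P)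
    (hcard : #Q.parts ≤ #P.parts) : Q = P := by
  -- `f` sends a part of `Q` to the part of `P` containing it.
  let f : Finset α → Finset α := fun q => q.sup P.part
  have hsup : ∀ q ∈ Q.parts, ∀ p ∈ P.parts, q ⊆ p → f q = p := fun q hq p hp hqp => by
    rw [← sup_const (Q.nonempty_of_mem_parts hq) p]
    exact sup_congr rfl fun a ha => P.part_eq_of_mem hp (hqp ha)
  have hmaps : Set.MapsTo f Q.parts P.parts := fun q hq => by
    obtain ⟨p, hp, hqp⟩ := hle hq
    exact hsup q hq p hp hqp ▸ hp
  have hsurj : Set.SurjOn f Q.parts P.parts := fun p hp => by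
    obtain ⟨q, hq, hqp⟩ := exists_le_of_le hle hp
    exact ⟨q, hq, hsup q hq p hp hqp⟩
  have hinj := injOn_of_surjOn_of_card_le _ hmaps hsurj hcard
  have hsub : P.parts ⊆ Q.parts := fun p hp => by
    obtain ⟨q, hq, hqp⟩ := exists_le_of_le hle hp
    suffices p ⊆ q from le_antisymm this hqp ▸ hq
    intro b hb
    have hbq : Q.part b ∈ Q.parts := Q.part_mem.2 (P.le hp hb)
    obtain ⟨p', hp', hbp'⟩ := hle hbq
    have hp'p : p' = p := P.eq_of_mem_parts hp' hp (hbp' (Q.mem_part (P.le hp hb))) hb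
    subst hp'p
    have : Q.part b = q := hinj hbq hq ((hsup _ hbq _ hp' hbp').trans (hsup q hq _ hp' hqp).symm)
    exact this ▸ Q.mem_part (P.le hp hb)
  exact Finpartition.ext (eq_of_subset_of_card_le hsub hcard).symm

theorem card_parts_lt_card_parts_inf {P Q : Finpartition s} (h : ¬P ≤ Q) :
    #P.parts < #(P ⊓ Q).parts := by
  by_contra! hcard
  exact h (eq_of_le_of_card_parts_le inf_le_left hcard ▸ inf_le_right)

theorem card_parts_lt_card_parts_inf_of_ne {P Q : Finpartition s} (hcard : #P.parts = #Q.parts)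
    (hne : P ≠ Q) : #P.parts < #(P ⊓ Q).parts :=
  card_parts_lt_card_parts_inf fun hle => hne (eq_of_le_of_card_parts_le hle hcard.le)

theorem inter_mem_parts_inf {P Q : Finpartition s} {p q : Finset α} (hp : p ∈ P.parts)
    (hq : q ∈ Q.parts) (hpq : (p ∩ q).Nonempty) : p ∩ q ∈ (P ⊓ Q).parts := by
  rw [parts_inf]
  exact mem_erase.2 ⟨hpq.ne_empty, mem_image.2 ⟨(p, q), mem_product.2 ⟨hp, hq⟩, rfl⟩⟩

end Finpartition

section Crossing

variable {V : Type} [Fintype V] (G : SimpleGraph V)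

theorem edgesCrossing_inf_subset (P₁ P₂ : Finpartition (univ : Finset V)) :
    edgesCrossing G (P₁ ⊓ P₂) ⊆ edgesCrossing G P₁ ∪ edgesCrossing G P₂ := by
  intro e he
  simp only [edgesCrossing, mem_union, mem_filter] at he ⊢
  by_contra! h
  obtain ⟨p₁, hp₁, hep₁⟩ := h.1 he.1
  obtain ⟨p₂, hp₂, hep₂⟩ := h.2 he.1
  have hep : ∀ v ∈ e, v ∈ p₁ ∩ p₂ := fun v hv => mem_inter.2 ⟨hep₁ v hv, hep₂ v hv⟩
  have hne : (p₁ ∩ p₂).Nonempty := ⟨e.out.1, hep _ e.out_fst_mem⟩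
  exact he.2 ⟨_, Finpartition.inter_mem_parts_inf hp₁ hp₂ hne, hep⟩

theorem card_edgesCrossing_inf_le (P₁ P₂ : Finpartition (univ : Finset V)) :
    #(edgesCrossing G (P₁ ⊓ P₂)) ≤ #(edgesCrossing G P₁) + #(edgesCrossing G P₂) :=
  (card_le_card (edgesCrossing_inf_subset G P₁ P₂)).trans (card_union_le _ _)

theorem card_edgesCrossing_inf_le_mul {P₁ P₂ : Finpartition (univ : Finset V)} {t : ℕ}
    (hcr₁ : #(edgesCrossing G P₁) = t) (hcr₂ : #(edgesCrossing G P₂) = t)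
    (h₃ : 3 ≤ #(P₁ ⊓ P₂).parts) :
    #(edgesCrossing G (P₁ ⊓ P₂)) ≤ t * (#(P₁ ⊓ P₂).parts - 1) :=
  calc #(edgesCrossing G (P₁ ⊓ P₂)) ≤ t * 2 := by
        have := card_edgesCrossing_inf_le G P₁ P₂
        omega
    _ ≤ t * (#(P₁ ⊓ P₂).parts - 1) := Nat.mul_le_mul_left t (by omega)

end Crossing

theorem stmt14_general {V : Type} [Fintype V] (G : SimpleGraph V) (t : ℕ) :
    (∀ P₁ P₂ : Finpartition (Finset.univ : Finset V),
      P₁.parts.card = 2 → P₂.parts.card = 2 → P₁ ≠ P₂ →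
      (edgesCrossing G P₁).card = t → (edgesCrossing G P₂).card = t →
      3 ≤ (P₁ ⊓ P₂).parts.card ∧
        (edgesCrossing G (P₁ ⊓ P₂)).card ≤ t * ((P₁ ⊓ P₂).parts.card - 1)) ∧
    ((∀ P : Finpartition (Finset.univ : Finset V), 3 ≤ P.parts.card →
        t * (P.parts.card - 1) + 1 ≤ (edgesCrossing G P).card) →
      ∀ P₁ P₂ : Finpartition (Finset.univ : Finset V),
        P₁.parts.card = 2 → P₂.parts.card = 2 →
        (edgesCrossing G P₁).card = t → (edgesCrossing G P₂).card = t → P₁ = P₂) := by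
  have two_lt_card_inf : ∀ {P₁ P₂ : Finpartition (univ : Finset V)},
      #P₁.parts = 2 → #P₂.parts = 2 → P₁ ≠ P₂ → 2 < #(P₁ ⊓ P₂).parts := fun h₁ h₂ hne =>
    h₁ ▸ Finpartition.card_parts_lt_card_parts_inf_of_ne (h₁.trans h₂.symm) hne
  refine ⟨fun P₁ P₂ h₁ h₂ hne hcr₁ hcr₂ => ?_, fun hcr P₁ P₂ h₁ h₂ hcr₁ hcr₂ => ?_⟩
  · have h₃ := two_lt_card_inf h₁ h₂ hne
    exact ⟨h₃, card_edgesCrossing_inf_le_mul G hcr₁ hcr₂ h₃⟩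
  · by_contra hne
    have h₃ := two_lt_card_inf h₁ h₂ hne
    have := card_edgesCrossing_inf_le_mul G hcr₁ hcr₂ h₃
    have := hcr (P₁ ⊓ P₂) h₃
    omega

/-- Suppose `G` is edge-colored with exactly
`max_{P : |P| ≥ 3}{|E(P,G)| + t(|P|-2)} + 1` colors and has no `t` pairwise
edge-disjoint rainbow spanning trees. If `P₁ ≠ P₂` are bipartitions of `V(G)`
with `|cr(P₁,G)| = |cr(P₂,G)| = t`, then their common refinement `P₁ ⊓ P₂` has
at least `3` parts and satisfies `|cr(P₁⊓P₂,G)| ≤ t(|P₁⊓P₂|-1)`. Consequently,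
if moreover every partition `P` with `|P| ≥ 3` satisfies
`|cr(P,G)| ≥ t(|P|-1)+1`, then at most one bipartition `P` has `|cr(P,G)| = t`. -/
theorem stmt14 {V : Type} [Fintype V] (G : SimpleGraph V) (t : ℕ) (ht : 0 < t)
    (hV : 3 ≤ Fintype.card V) (c : Sym2 V → ℕ)
    (hc : (G.edgeFinset.image c).card = maxNonCross3 G t + 1)
    (hno : ¬ HasRainbowSpanningTrees G c t) :
    (∀ P₁ P₂ : Finpartition (Finset.univ : Finset V),
      P₁.parts.card = 2 → P₂.parts.card = 2 → P₁ ≠ P₂ →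
      (edgesCrossing G P₁).card = t → (edgesCrossing G P₂).card = t →
      3 ≤ (P₁ ⊓ P₂).parts.card ∧
        (edgesCrossing G (P₁ ⊓ P₂)).card ≤ t * ((P₁ ⊓ P₂).parts.card - 1)) ∧
    ((∀ P : Finpartition (Finset.univ : Finset V), 3 ≤ P.parts.card →
        t * (P.parts.card - 1) + 1 ≤ (edgesCrossing G P).card) →
      ∀ P₁ P₂ : Finpartition (Finset.univ : Finset V),
        P₁.parts.card = 2 → P₂.parts.card = 2 →
        (edgesCrossing G P₁).card = t → (edgesCrossing G P₂).card = t → P₁ = P₂) :=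
  stmt14_general G t
end

section
/- Let G = K_{n₁,n₂,...,n_r} be a complete r-partite graph with n₁ ≥ n₂ ≥ ... ≥ n_r ≥ 1 and n = n₁ + ... + n_r vertices, and for 2 ≤ s ≤ n define f_G(s) as the maximum of |E(P,G)| over all partitions P of V(G) into exactly s nonempty parts. Then f_G is concave upward: for all 2 ≤ s ≤ n-2, f_G(s) + f_G(s+2) ≥ 2 f_G(s+1). -/
open Finset
open scoped Classical

/-! Take a partition `P` with `s + 1` parts attaining `f(s + 1)`. As `s + 1 < n`, some part `t`
has two vertices, and as `s + 1 ≥ 2` there is another part `p ∋ u`. Merging `p` and `t` gains at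
least the edges from `u` to `t`, and splitting a vertex `v` off `t` loses at most the edges from
`v` to `t`. In a complete multipartite graph, a vertex `v ∈ t` of a class that is most frequent in
`t` has no more neighbours in `t` than any other vertex `u`, so
`f(s) + f(s + 2) ≥ (|E(P)| + d_t(u)) + (|E(P)| - d_t(v)) ≥ 2 f(s + 1)`. -/

namespace Finpartition

variable {α : Type*} [DecidableEq α] {s : Finset α} (P : Finpartition s)
  {old new : Finset (Finset α)}

lemma disjoint_sup_of_mem_sdiff (hold : old ⊆ P.parts) {q : Finset α} (hq : q ∈ P.parts \ old) :
    Disjoint q (old.sup id) := by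
  rw [mem_sdiff] at hq
  exact Finset.disjoint_sup_right.mpr fun o ho ↦
    P.disjoint hq.1 (hold ho) fun h ↦ hq.2 (h ▸ ho)

@[simps]
def replaceParts (hold : old ⊆ P.parts) (hnew : (new : Set (Finset α)).PairwiseDisjoint id)
    (hempty : ∅ ∉ new) (hsup : new.sup id = old.sup id) : Finpartition s where
  parts := P.parts \ old ∪ new
  supIndep := by
    rw [supIndep_iff_pairwiseDisjoint, coe_union, Set.pairwiseDisjoint_union]
    refine ⟨P.disjoint.subset (by simp), hnew, fun q hq o ho _ ↦ ?_⟩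
    exact (P.disjoint_sup_of_mem_sdiff hold hq).mono_right (hsup ▸ le_sup (f := id) ho)
  sup_parts := by rw [sup_union, hsup, ← sup_union, sdiff_union_of_subset hold, P.sup_parts]
  bot_notMem := by simp [P.empty_notMem_parts, hempty]

variable {hold : old ⊆ P.parts} {hnew : (new : Set (Finset α)).PairwiseDisjoint id}
  {hempty : ∅ ∉ new} {hsup : new.sup id = old.sup id}

lemma card_replaceParts_add :
    #(P.replaceParts hold hnew hempty hsup).parts + #old = #P.parts + #new := by
  have hdisj : Disjoint (P.parts \ old) new := by
    refine Finset.disjoint_left.mpr fun q hq hqn ↦ hempty ?_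
    have hqq := (P.disjoint_sup_of_mem_sdiff hold hq).mono_right (hsup ▸ le_sup (f := id) hqn)
    have hq0 : q = ∅ := disjoint_self.mp hqq
    exact hq0 ▸ hqn
  rw [replaceParts_parts, card_union_of_disjoint hdisj, card_sdiff_of_subset hold]
  have := card_le_card hold
  omega

lemma le_replaceParts (h : ∀ o ∈ old, ∃ n ∈ new, o ⊆ n) :
    P ≤ P.replaceParts hold hnew hempty hsup := by
  intro o ho
  by_cases hold' : o ∈ old
  · obtain ⟨n, hn, hon⟩ := h o hold'
    exact ⟨n, mem_union_right _ hn, hon⟩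
  · exact ⟨o, mem_union_left _ (mem_sdiff.mpr ⟨ho, hold'⟩), le_rfl⟩

end Finpartition

section NonCrossing

variable {V : Type} [Fintype V] (G : SimpleGraph V) {P Q : Finpartition (univ : Finset V)}

lemma mk_mem_edgesNonCrossing {a b : V} :
    s(a, b) ∈ edgesNonCrossing G P ↔ G.Adj a b ∧ ∃ p ∈ P.parts, a ∈ p ∧ b ∈ p := by
  simp [edgesNonCrossing]

lemma edgesNonCrossing_mono (h : P ≤ Q) : edgesNonCrossing G P ⊆ edgesNonCrossing G Q := by
  intro e he
  simp only [edgesNonCrossing, mem_filter] at he ⊢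
  obtain ⟨he, p, hp, hep⟩ := he
  obtain ⟨q, hq, hpq⟩ := h hp
  exact ⟨he, q, hq, fun v hv ↦ hpq (hep v hv)⟩

lemma card_edgesNonCrossing_add_card_adj_le (h : P ≤ Q) {p t q : Finset V} (hp : p ∈ P.parts)
    (ht : t ∈ P.parts) (hpt : p ≠ t) (hq : q ∈ Q.parts) (hpq : p ⊆ q) (htq : t ⊆ q) {u : V}
    (hu : u ∈ p) :
    #(edgesNonCrossing G P) + #(t.filter (G.Adj u)) ≤ #(edgesNonCrossing G Q) := by
  set X := (t.filter (G.Adj u)).image (s(u, ·))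
  have hX : #X = #(t.filter (G.Adj u)) :=
    card_image_of_injective _ fun _ _ h ↦ Sym2.congr_right.mp h
  have hdisj : Disjoint (edgesNonCrossing G P) X := by
    refine Finset.disjoint_right.mpr ?_
    simp only [X, mem_image, mem_filter]
    rintro _ ⟨w, ⟨hwt, -⟩, rfl⟩ hP
    obtain ⟨-, r, hr, hur, hwr⟩ := (mk_mem_edgesNonCrossing G).mp hP
    exact hpt ((P.eq_of_mem_parts hr hp hur hu).symm.trans (P.eq_of_mem_parts hr ht hwr hwt))
  have hXQ : X ⊆ edgesNonCrossing G Q := by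
    simp only [X, subset_iff, mem_image, mem_filter]
    rintro _ ⟨w, ⟨hwt, hadj⟩, rfl⟩
    exact (mk_mem_edgesNonCrossing G).mpr ⟨hadj, q, hq, hpq hu, htq hwt⟩
  rw [← hX, ← card_union_of_disjoint hdisj]
  exact card_le_card (union_subset (edgesNonCrossing_mono G h) hXQ)

lemma card_edgesNonCrossing_le_add_card_adj {t : Finset V} (ht : t ∈ P.parts) {v : V}
    (hv : v ∈ t) (hQ : ∀ r ∈ P.parts, ∃ q ∈ Q.parts, r.erase v ⊆ q) :
    #(edgesNonCrossing G P) ≤ #(edgesNonCrossing G Q) + #(t.filter (G.Adj v)) := by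
  set Y := (t.filter (G.Adj v)).image (s(v, ·))
  have hsub : edgesNonCrossing G P ⊆ edgesNonCrossing G Q ∪ Y := by
    intro e he
    induction e using Sym2.ind with
    | _ a b =>
      obtain ⟨hadj, r, hr, har, hbr⟩ := (mk_mem_edgesNonCrossing G).mp he
      simp only [Y, mem_union, mem_image, mem_filter]
      by_cases hav : a = v
      · subst hav
        exact Or.inr ⟨b, ⟨P.eq_of_mem_parts hr ht har hv ▸ hbr, hadj⟩, rfl⟩
      by_cases hbv : b = v
      · subst hbv
        exact Or.inr ⟨a, ⟨P.eq_of_mem_parts hr ht hbr hv ▸ har, hadj.symm⟩, Sym2.eq_swap⟩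
      obtain ⟨q, hq, hrq⟩ := hQ r hr
      exact Or.inl ((mk_mem_edgesNonCrossing G).mpr
        ⟨hadj, q, hq, hrq (mem_erase.mpr ⟨hav, har⟩), hrq (mem_erase.mpr ⟨hbv, hbr⟩)⟩)
  exact (card_le_card hsub).trans ((card_union_le _ _).trans (by gcongr; exact card_image_le))

end NonCrossing

section fMax

variable {V : Type} [Fintype V] (G : SimpleGraph V)

lemma bddAbove_card_edgesNonCrossing (k : ℕ) :
    BddAbove {m | ∃ P : Finpartition (univ : Finset V), #P.parts = k ∧
      m = #(edgesNonCrossing G P)} :=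
  ⟨#G.edgeFinset, by rintro _ ⟨P, -, rfl⟩; exact card_le_card (filter_subset _ _)⟩

lemma card_edgesNonCrossing_le_fMax (P : Finpartition (univ : Finset V)) :
    #(edgesNonCrossing G P) ≤ fMax G #P.parts :=
  le_csSup (bddAbove_card_edgesNonCrossing G _) ⟨P, rfl, rfl⟩

lemma exists_card_edgesNonCrossing_eq_fMax {k : ℕ} (hk : fMax G k ≠ 0) :
    ∃ P : Finpartition (univ : Finset V), #P.parts = k ∧ #(edgesNonCrossing G P) = fMax G k := by
  have hne : {m | ∃ P : Finpartition (univ : Finset V), #P.parts = k ∧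
      m = #(edgesNonCrossing G P)}.Nonempty := by
    by_contra h
    exact hk (by rw [fMax, Set.not_nonempty_iff_eq_empty.mp h, csSup_empty]; rfl)
  obtain ⟨P, hP, hPm⟩ := Nat.sSup_mem hne (bddAbove_card_edgesNonCrossing G k)
  exact ⟨P, hP, hPm.symm⟩

lemma card_edgesNonCrossing_add_card_adj_le_fMax_pred (P : Finpartition (univ : Finset V))
    {p t : Finset V} (hp : p ∈ P.parts) (ht : t ∈ P.parts) (hpt : p ≠ t) {u : V} (hu : u ∈ p) :
    #(edgesNonCrossing G P) + #(t.filter (G.Adj u)) ≤ fMax G (#P.parts - 1) := by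
  have hold : {p, t} ⊆ P.parts := insert_subset hp (singleton_subset_iff.mpr ht)
  let Q := P.replaceParts hold (new := {p ∪ t}) (by simp)
    (by rw [mem_singleton, eq_comm, union_eq_empty]; exact fun h ↦ P.ne_empty hp h.1) (by simp)
  have hQ : #Q.parts + 2 = #P.parts + 1 := by
    rw [← card_pair hpt, ← card_singleton (p ∪ t)]
    exact P.card_replaceParts_add
  have hPQ : P ≤ Q := P.le_replaceParts (by simp)
  have hQpt : p ∪ t ∈ Q.parts := by simp [Q]
  calc #(edgesNonCrossing G P) + #(t.filter (G.Adj u))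
      ≤ #(edgesNonCrossing G Q) := card_edgesNonCrossing_add_card_adj_le G hPQ hp ht hpt hQpt
        subset_union_left subset_union_right hu
    _ ≤ fMax G (#P.parts - 1) := by
        rw [show #P.parts - 1 = #Q.parts by omega]
        exact card_edgesNonCrossing_le_fMax G Q

lemma card_edgesNonCrossing_le_fMax_succ_add_card_adj (P : Finpartition (univ : Finset V))
    {t : Finset V} (ht : t ∈ P.parts) {v : V} (hv : v ∈ t) (ht2 : 1 < #t) :
    #(edgesNonCrossing G P) ≤ fMax G (#P.parts + 1) + #(t.filter (G.Adj v)) := by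
  have hne : (t.erase v).Nonempty := by rw [← card_pos, card_erase_of_mem hv]; omega
  have hvt : {v} ≠ t.erase v := fun h ↦ notMem_erase v t (h ▸ mem_singleton_self v)
  let R := P.replaceParts (singleton_subset_iff.mpr ht) (new := {{v}, t.erase v})
    (by simp [Set.pairwiseDisjoint_insert_of_notMem, hvt])
    (by simp [hne.ne_empty.symm]) (by simp [insert_erase hv])
  have hR : #R.parts + 1 = #P.parts + 2 := by
    rw [← card_pair hvt, ← card_singleton t]
    exact P.card_replaceParts_add
  have hPR : ∀ r ∈ P.parts, ∃ q ∈ R.parts, r.erase v ⊆ q := by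
    intro r hr
    by_cases hrt : r = t
    · exact ⟨t.erase v, by simp [R], hrt ▸ subset_rfl⟩
    · exact ⟨r, by simp [R, hr, hrt], erase_subset v r⟩
  calc #(edgesNonCrossing G P)
      ≤ #(edgesNonCrossing G R) + #(t.filter (G.Adj v)) :=
        card_edgesNonCrossing_le_add_card_adj G ht hv hPR
    _ ≤ fMax G (#P.parts + 1) + #(t.filter (G.Adj v)) := by
        rw [show #P.parts + 1 = #R.parts by omega]
        gcongr
        exact card_edgesNonCrossing_le_fMax G R

theorem two_mul_fMax_succ_le_add
    (hmin : ∀ t : Finset V, t.Nonempty →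
      ∃ v ∈ t, ∀ u, #(t.filter (G.Adj v)) ≤ #(t.filter (G.Adj u)))
    {k : ℕ} (hk : 2 ≤ k) (hkV : k + 2 ≤ Fintype.card V) :
    2 * fMax G (k + 1) ≤ fMax G k + fMax G (k + 2) := by
  by_cases h0 : fMax G (k + 1) = 0
  · simp [h0]
  obtain ⟨P, hPk, hP⟩ := exists_card_edgesNonCrossing_eq_fMax G h0
  obtain ⟨t, ht, ht2⟩ : ∃ t ∈ P.parts, 1 < #t := by
    refine exists_lt_of_sum_lt ?_
    rw [P.sum_card_parts, card_univ, sum_const, smul_eq_mul, mul_one]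
    omega
  obtain ⟨p, hp, hpt⟩ := exists_mem_ne (by omega : 1 < #P.parts) t
  obtain ⟨u, hu⟩ := P.nonempty_of_mem_parts hp
  obtain ⟨v, hv, hvmin⟩ := hmin t (card_pos.mp (by omega))
  have hmerge : fMax G (k + 1) + #(t.filter (G.Adj u)) ≤ fMax G k := by
    simpa [hPk, hP] using card_edgesNonCrossing_add_card_adj_le_fMax_pred G P hp ht hpt hu
  have hsplit : fMax G (k + 1) ≤ fMax G (k + 2) + #(t.filter (G.Adj v)) := by
    simpa [hPk, hP] using card_edgesNonCrossing_le_fMax_succ_add_card_adj G P ht hv ht2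
  have := hvmin u
  omega

end fMax

lemma SimpleGraph.completeMultipartiteGraph_exists_min_adj {ι : Type*} (W : ι → Type*)
    (t : Finset (Σ i, W i)) (ht : t.Nonempty) : ∃ v ∈ t, ∀ u,
      #(t.filter ((completeMultipartiteGraph W).Adj v)) ≤
        #(t.filter ((completeMultipartiteGraph W).Adj u)) := by
  have hcompl : ∀ x, #(t.filter ((completeMultipartiteGraph W).Adj x)) +
      #(t.filter (fun w ↦ w.1 = x.1)) = #t := by
    intro x
    rw [← card_filter_add_card_filter_not (s := t) ((completeMultipartiteGraph W).Adj x)]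
    congr 2
    ext w
    simp [eq_comm]
  obtain ⟨v, hv, hvmax⟩ := exists_max_image t (fun x ↦ #(t.filter (fun w ↦ w.1 = x.1))) ht
  refine ⟨v, hv, fun u ↦ ?_⟩
  have hclass : #(t.filter (fun w ↦ w.1 = u.1)) ≤ #(t.filter (fun w ↦ w.1 = v.1)) := by
    rcases (t.filter (fun w ↦ w.1 = u.1)).eq_empty_or_nonempty with hempty | ⟨w, hw⟩
    · simp [hempty]
    · rw [mem_filter] at hw
      rw [← hw.2]
      exact hvmax w hw.1
  have := hcompl u
  have := hcompl v
  omega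

theorem stmt15_general (r : ℕ) (n : ℕ → ℕ) :
    ∀ s, 2 ≤ s → s ≤ (∑ i ∈ Finset.range r, n i) - 2 →
      2 * fMax (SimpleGraph.completeMultipartiteGraph (fun i : Fin r => Fin (n i))) (s + 1) ≤
        fMax (SimpleGraph.completeMultipartiteGraph (fun i : Fin r => Fin (n i))) s +
          fMax (SimpleGraph.completeMultipartiteGraph (fun i : Fin r => Fin (n i))) (s + 2) := by
  intro s hs hsn
  have hcard : Fintype.card (Σ i : Fin r, Fin (n i)) = ∑ i ∈ range r, n i := by
    simp only [Fintype.card_sigma, Fintype.card_fin, Fin.sum_univ_eq_sum_range n r]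
  refine two_mul_fMax_succ_le_add _ (fun t ht ↦ ?_) hs (by omega)
  -- the two sides differ only in their `Decidable` instances
  convert SimpleGraph.completeMultipartiteGraph_exists_min_adj _ t ht

/-- For a complete `r`-partite graph `G = K_{n₁,…,n_r}` with
`n₁ ≥ ⋯ ≥ n_r ≥ 1` and `n = n₁ + ⋯ + n_r` vertices, the function
`f_G(s) = max_{|P| = s} |E(P,G)|` is concave upward:
`f_G(s) + f_G(s+2) ≥ 2 f_G(s+1)` for all `2 ≤ s ≤ n - 2`. -/
theorem stmt15 (r : ℕ) (hr : 0 < r) (n : ℕ → ℕ)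
    (hpos : ∀ i < r, 0 < n i)
    (hmono : ∀ i j, i ≤ j → j < r → n j ≤ n i) :
    ∀ s, 2 ≤ s → s ≤ (∑ i ∈ Finset.range r, n i) - 2 →
      2 * fMax (SimpleGraph.completeMultipartiteGraph (fun i : Fin r => Fin (n i))) (s + 1) ≤
        fMax (SimpleGraph.completeMultipartiteGraph (fun i : Fin r => Fin (n i))) s +
          fMax (SimpleGraph.completeMultipartiteGraph (fun i : Fin r => Fin (n i))) (s + 2) :=
  stmt15_general r n
end

section
/- Let G be a finite complete multipartite graph and 2 ≤ s ≤ |V(G)|. Among all partitions of V(G) into exactly s nonempty parts, the maximum of |E(P,G)| is achieved by a partition P₀ obtained from the trivial partition {V(G)} by performing s-1 successive splitting steps, where each step removes a single vertex from a currently largest part (measured by the number of non-crossing edges it induces) to form a new singleton part. -/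
open Finset
open scoped Classical

/-! In a complete multipartite graph, disjoint vertex sets `p`, `q` of size at least two satisfy
`2 e(p) ≤ e(p, q) (|p| - 1)` and symmetrically for `q`. Hence the average degree inside `p ∪ q`
is at most `e(p, q)`, and replacing the parts `p`, `q` by `(p ∪ q) \ {v}` and `{v}` for a vertex
`v` of at most that degree loses no non-crossing edge. Iterating, every partition into `s` parts
is dominated by one made of a single part and `s - 1` singletons. These are exactly the
partitions reached by the splitting steps, since a singleton induces no edge. -/

open SimpleGraph

namespace SimpleGraph

variable {V : Type*} (G : SimpleGraph V) [DecidableRel G.Adj]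

theorem card_interedges_comm (s t : Finset V) :
    #(G.interedges s t) = #(G.interedges t s) :=
  have := G.symm
  Rel.card_interedges_comm s t

variable [DecidableEq V]

theorem card_interedges_union_left {s t : Finset V} (h : Disjoint s t) (u : Finset V) :
    #(G.interedges (s ∪ t) u) = #(G.interedges s u) + #(G.interedges t u) := by
  rw [← card_union_of_disjoint (G.interedges_disjoint_left h u), interedges_def,
    union_product, filter_union]
  rfl

theorem card_interedges_union_right (s : Finset V) {t u : Finset V} (h : Disjoint t u) :
    #(G.interedges s (t ∪ u)) = #(G.interedges s t) + #(G.interedges s u) := by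
  simp only [G.card_interedges_comm s, G.card_interedges_union_left h]

theorem sum_card_interedges_singleton_left (s t : Finset V) :
    ∑ v ∈ s, #(G.interedges {v} t) = #(G.interedges s t) := by
  induction s using Finset.induction_on with
  | empty => simp
  | insert a s ha ih =>
    rw [sum_insert ha, ih, insert_eq, G.card_interedges_union_left (disjoint_singleton_left.2 ha)]

end SimpleGraph

section EdgesWithin

variable {V : Type} [Fintype V] (G : SimpleGraph V)

theorem two_mul_edgesWithin (p : Finset V) :
    2 * edgesWithin G p = #(G.interedges p p) := by
  set H := ((⊤ : G.Subgraph).induce (p : Set V)).spanningCoe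
  have hH : H.edgeFinset = G.edgeFinset.filter fun e => ∀ v ∈ e, v ∈ p := by
    ext e
    induction e with
    | _ a b =>
      simp only [mem_edgeFinset, Subgraph.edgeSet_spanningCoe, Subgraph.mem_edgeSet,
        Subgraph.induce_adj, SetLike.mem_coe, Subgraph.top_adj, mem_filter, mem_edgeSet,
        Sym2.mem_iff, forall_eq_or_imp, forall_eq, H]
      tauto
  rw [edgesWithin, ← hH, two_mul_card_edgeFinset]
  congr 1
  ext ⟨a, b⟩
  simp only [Subgraph.spanningCoe_adj, Subgraph.induce_adj, SetLike.mem_coe, Subgraph.top_adj,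
    mem_filter, mem_univ, true_and, interedges_def, mem_product, H]
  tauto

theorem edgesWithin_singleton (v : V) : edgesWithin G {v} = 0 := by
  simpa [interedges_def, filter_singleton] using two_mul_edgesWithin G {v}

theorem edgesWithin_union {s t : Finset V} (h : Disjoint s t) :
    edgesWithin G (s ∪ t) = edgesWithin G s + edgesWithin G t + #(G.interedges s t) := by
  have := two_mul_edgesWithin G (s ∪ t)
  rw [G.card_interedges_union_left h, G.card_interedges_union_right _ h,
    G.card_interedges_union_right _ h, G.card_interedges_comm t s, ← two_mul_edgesWithin,
    ← two_mul_edgesWithin] at this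
  omega

theorem edgesWithin_erase_add {s : Finset V} {v : V} (hv : v ∈ s) :
    edgesWithin G (s.erase v) + #(G.interedges {v} s) = edgesWithin G s := by
  obtain ⟨t, hvt, rfl⟩ : ∃ t, v ∉ t ∧ s = insert v t :=
    ⟨s.erase v, notMem_erase v s, (insert_erase hv).symm⟩
  have hdisj : Disjoint {v} t := disjoint_singleton_left.2 hvt
  have hloop : #(G.interedges {v} {v}) = 0 := by
    rw [← two_mul_edgesWithin, edgesWithin_singleton, mul_zero]
  rw [erase_insert hvt, insert_eq, edgesWithin_union G hdisj, edgesWithin_singleton,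
    G.card_interedges_union_right _ hdisj, hloop]
  omega

theorem card_edgesNonCrossing (P : Finpartition (univ : Finset V)) :
    #(edgesNonCrossing G P) = ∑ p ∈ P.parts, edgesWithin G p := by
  have hbi : edgesNonCrossing G P
      = P.parts.biUnion fun p => G.edgeFinset.filter fun e => ∀ v ∈ e, v ∈ p := by
    ext e
    simp only [edgesNonCrossing, mem_filter, mem_biUnion]
    tauto
  rw [hbi, card_biUnion]
  · rfl
  · intro p hp p' hp' hpp'
    refine disjoint_left.2 fun e he he' => ?_
    have ha := Sym2.out_fst_mem e
    exact disjoint_left.1 (P.disjoint hp hp' hpp') ((mem_filter.1 he).2 _ ha)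
      ((mem_filter.1 he').2 _ ha)

end EdgesWithin

namespace SimpleGraph.IsCompleteMultipartite

theorem card_interedges_self_le {V : Type*} {G : SimpleGraph V} [DecidableRel G.Adj]
    [DecidableEq V] (hG : G.IsCompleteMultipartite) {p q : Finset V} (hq : 1 < #q) :
    #(G.interedges p p) ≤ #(G.interedges p q) * (#p - 1) := by
  obtain ⟨w₀, hw₀, w₁, hw₁, hw⟩ := one_lt_card.mp hq
  have hnonadj : ∀ x y w, ¬G.Adj x w → ¬G.Adj y w → ¬G.Adj x y := fun x y w hx hy =>
    hG.trans x w y hx fun h => hy h.symm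
  have htarget : #((G.interedges p q).sigma fun z => p.erase z.1) =
      #(G.interedges p q) * (#p - 1) := by
    rw [card_sigma, sum_const_nat fun z hz => card_erase_of_mem (G.mem_interedges_iff.mp hz).1]
  rw [← htarget]
  -- Charge `(x, y)` to a `p`–`q` edge at `x`, or at `y` when `x` sees neither `w₀` nor `w₁`
  -- (then `y` sees `w₁`, as non-adjacency is transitive).
  refine card_le_card_of_injOn (fun z => if G.Adj z.1 w₀ then ⟨(z.1, w₀), z.2⟩
    else if G.Adj z.1 w₁ then ⟨(z.1, w₁), z.2⟩ else ⟨(z.2, w₁), z.1⟩) ?_ ?_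
  · rintro ⟨x, y⟩ hxy
    simp only [coe_sigma, mem_coe, mem_interedges_iff] at hxy ⊢
    obtain ⟨hx, hy, hadj⟩ := hxy
    have hyw₁ : ¬G.Adj x w₁ → G.Adj y w₁ := fun h₁ =>
      not_not.1 fun h => hnonadj x y w₁ h₁ h hadj
    split_ifs with h₀ h₁ <;> simp [mem_interedges_iff, *, hadj.ne, hadj.ne']
  · rintro ⟨x, y⟩ hxy ⟨x', y'⟩ hxy' heq
    simp only [mem_coe, mem_interedges_iff] at hxy hxy'
    -- The only possible collision, `((x, w₁), y) = ((y', w₁), x')`, would make the adjacent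
    -- vertices `x'` and `y'` both non-adjacent to `w₀`.
    have hx'y' := hnonadj x' y' w₀
    dsimp only at heq
    split_ifs at heq <;> grind

variable {V : Type} [Fintype V] {G : SimpleGraph V}

theorem exists_add_edgesWithin_le_erase_of_one_lt_card
    (hG : G.IsCompleteMultipartite) {p q : Finset V} (h : Disjoint p q) (hp : 1 < #p)
    (hq : 1 < #q) :
    ∃ v ∈ p ∪ q, edgesWithin G p + edgesWithin G q ≤ edgesWithin G ((p ∪ q).erase v) := by
  have hpc : 2 * edgesWithin G p ≤ #(G.interedges p q) * (#p - 1) := by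
    rw [two_mul_edgesWithin]
    exact hG.card_interedges_self_le hq
  have hqc : 2 * edgesWithin G q ≤ #(G.interedges p q) * (#q - 1) := by
    rw [two_mul_edgesWithin, G.card_interedges_comm p q]
    exact hG.card_interedges_self_le hp
  set c := #(G.interedges p q)
  have hsum : ∑ v ∈ p ∪ q, #(G.interedges {v} (p ∪ q)) ≤ ∑ _v ∈ p ∪ q, c := by
    rw [G.sum_card_interedges_singleton_left, ← two_mul_edgesWithin, edgesWithin_union G h,
      sum_const, smul_eq_mul, card_union_of_disjoint h]
    have hp' : c * (#p - 1) + c = c * #p := by rw [← mul_add_one, Nat.sub_add_cancel hp.le]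
    have hq' : c * (#q - 1) + c = c * #q := by rw [← mul_add_one, Nat.sub_add_cancel hq.le]
    linarith
  have hne : (p ∪ q).Nonempty := (card_pos.1 (by omega)).mono subset_union_left
  obtain ⟨v, hv, hdeg⟩ := exists_le_of_sum_le hne hsum
  refine ⟨v, hv, ?_⟩
  have := edgesWithin_erase_add G hv
  rw [edgesWithin_union G h] at this
  omega

theorem exists_add_edgesWithin_le_erase
    (hG : G.IsCompleteMultipartite) {p q : Finset V} (h : Disjoint p q) (hp : p.Nonempty)
    (hq : q.Nonempty) :
    ∃ v ∈ p ∪ q, edgesWithin G p + edgesWithin G q ≤ edgesWithin G ((p ∪ q).erase v) := by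
  rcases hp.exists_eq_singleton_or_nontrivial with ⟨u, rfl⟩ | hp
  · refine ⟨u, mem_union_left _ (mem_singleton_self u), ?_⟩
    rw [← insert_eq, erase_insert (disjoint_singleton_left.1 h), edgesWithin_singleton, zero_add]
  rcases hq.exists_eq_singleton_or_nontrivial with ⟨u, rfl⟩ | hq
  · refine ⟨u, mem_union_right _ (mem_singleton_self u), ?_⟩
    rw [union_comm, ← insert_eq, erase_insert (disjoint_singleton_right.1 h),
      edgesWithin_singleton, add_zero]
  exact hG.exists_add_edgesWithin_le_erase_of_one_lt_card h (one_lt_card_iff_nontrivial.2 hp)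
    (one_lt_card_iff_nontrivial.2 hq)

theorem exists_sum_edgesWithin_le
    (hG : G.IsCompleteMultipartite) (n : ℕ) (F : Finset (Finset V)) (hF : #F = n + 1)
    (hdisj : (F : Set (Finset V)).PairwiseDisjoint id) (hne : ∀ p ∈ F, p.Nonempty) :
    ∃ T : Finset V, #T + n = ∑ p ∈ F, #p ∧
      ∑ p ∈ F, edgesWithin G p ≤ edgesWithin G T := by
  induction n generalizing F with
  | zero =>
    obtain ⟨T, rfl⟩ := card_eq_one.1 hF
    exact ⟨T, by simp⟩
  | succ n ih =>
    obtain ⟨p, hp, q, hq, hpq⟩ := one_lt_card.1 (by omega : 1 < #F)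
    have hpq' : Disjoint p q := hdisj hp hq hpq
    obtain ⟨v, hv, hvpq⟩ := hG.exists_add_edgesWithin_le_erase hpq' (hne p hp) (hne q hq)
    set m := (p ∪ q).erase v
    set R := (F.erase p).erase q
    have hqF : q ∈ F.erase p := mem_erase.2 ⟨hpq.symm, hq⟩
    have hsplit (f : Finset V → ℕ) : ∑ r ∈ F, f r = f p + f q + ∑ r ∈ R, f r := by
      rw [add_assoc, add_sum_erase _ _ hqF, add_sum_erase _ _ hp]
    have hRF : R ⊆ F := (erase_subset _ _).trans (erase_subset _ _)
    have hm_disj : ∀ r ∈ R, Disjoint m r := fun r hr => by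
      obtain ⟨hrq, hr⟩ := mem_erase.1 hr
      obtain ⟨hrp, hr⟩ := mem_erase.1 hr
      exact (disjoint_union_left.2 ⟨hdisj hp hr hrp.symm, hdisj hq hr hrq.symm⟩).mono_left
        (erase_subset _ _)
    have hcard_m : #m + 1 = #p + #q := by
      rw [card_erase_add_one hv, card_union_of_disjoint hpq']
    have hm : m.Nonempty := by
      have := (hne p hp).card_pos
      have := (hne q hq).card_pos
      exact card_pos.1 (by omega)
    have hmR : m ∉ R := fun h => hm.ne_empty (disjoint_self.1 (hm_disj m h))
    have hcard : #(insert m R) = n + 1 := by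
      rw [card_insert_of_notMem hmR, card_erase_of_mem hqF, card_erase_of_mem hp]
      omega
    obtain ⟨T, hT, hle⟩ := ih (insert m R) hcard
      (by rw [coe_insert]; exact (hdisj.subset hRF).insert fun r hr _ => hm_disj r hr)
      (forall_mem_insert _ _ _ |>.2 ⟨hm, fun r hr => hne r (hRF hr)⟩)
    rw [sum_insert hmR] at hT hle
    refine ⟨T, ?_, ?_⟩ <;> rw [hsplit] <;> omega

theorem exists_card_edgesNonCrossing_le [Nonempty V] (hG : G.IsCompleteMultipartite)
    (P : Finpartition (univ : Finset V)) :
    ∃ T : Finset V, #T + #P.parts = Fintype.card V + 1 ∧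
      #(edgesNonCrossing G P) ≤ edgesWithin G T := by
  have hP : 0 < #P.parts := card_pos.2 (P.parts_nonempty univ_nonempty.ne_empty)
  obtain ⟨T, hT, hle⟩ := hG.exists_sum_edgesWithin_le (#P.parts - 1) P.parts (by omega)
    P.disjoint fun p => P.nonempty_of_mem_parts
  rw [P.sum_card_parts, card_univ] at hT
  exact ⟨T, by omega, (card_edgesNonCrossing G P).trans_le hle⟩

end SimpleGraph.IsCompleteMultipartite

section PartWithSingletons

variable {V : Type} [Fintype V] (G : SimpleGraph V)

theorem Finset.notMem_map_singleton_sdiff {α : Type*} {s t : Finset α} (ht : t.Nonempty) :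
    t ∉ (s \ t).map ⟨singleton, singleton_injective⟩ := by
  rintro h
  obtain ⟨a, ha, rfl⟩ := mem_map.1 h
  exact (mem_sdiff.1 ha).2 (mem_singleton_self a)

noncomputable def partWithSingletons (T : Finset V) (hT : T.Nonempty) :
    Finpartition (univ : Finset V) :=
  (⊥ : Finpartition (univ \ T)).extend hT.ne_empty sdiff_disjoint
    (sdiff_sup_cancel (subset_univ T))

theorem parts_partWithSingletons (T : Finset V) (hT : T.Nonempty) :
    (partWithSingletons T hT).parts =
      insert T ((univ \ T).map ⟨singleton, singleton_injective⟩) :=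
  rfl

theorem card_parts_partWithSingletons (T : Finset V) (hT : T.Nonempty) :
    #(partWithSingletons T hT).parts + #T = Fintype.card V + 1 := by
  rw [partWithSingletons, Finpartition.card_extend, Finpartition.card_bot,
    card_sdiff_of_subset (subset_univ T), card_univ]
  have := card_le_univ T
  omega

theorem card_edgesNonCrossing_partWithSingletons (T : Finset V) (hT : T.Nonempty) :
    #(edgesNonCrossing G (partWithSingletons T hT)) = edgesWithin G T := by
  rw [card_edgesNonCrossing, parts_partWithSingletons, sum_insert (notMem_map_singleton_sdiff hT),
    sum_map]
  simp [edgesWithin_singleton]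

theorem splitStep_partWithSingletons_insert {v : V} {T : Finset V} (hv : v ∉ T)
    (hT : T.Nonempty) :
    SplitStep G (partWithSingletons (insert v T) (insert_nonempty v T))
      (partWithSingletons T hT) := by
  refine ⟨insert v T, mem_insert_self _ _, ?_, v, mem_insert_self _ _, ?_, ?_⟩
  · intro q hq
    rw [parts_partWithSingletons, mem_insert, mem_map] at hq
    obtain rfl | ⟨a, -, rfl⟩ := hq
    · exact le_rfl
    · simp [edgesWithin_singleton]
  · rw [erase_insert hv]
    exact hT.ne_empty
  · have hvT : v ∈ univ \ T := mem_sdiff.2 ⟨mem_univ v, hv⟩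
    rw [parts_partWithSingletons, parts_partWithSingletons, erase_insert hv,
      erase_insert (notMem_map_singleton_sdiff (insert_nonempty v T)), sdiff_insert]
    conv_lhs => rw [← insert_erase hvT, map_insert]
    exact insert_comm _ _ _

theorem reflTransGen_splitStep_partWithSingletons [Nonempty V] (T : Finset V)
    (hT : T.Nonempty) :
    Relation.ReflTransGen (SplitStep G) (Finpartition.indiscrete univ_nonempty.ne_empty)
      (partWithSingletons T hT) := by
  induction hn : #(univ \ T) generalizing T with
  | zero =>
    obtain rfl : T = univ := by simpa using hn
    convert Relation.ReflTransGen.refl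
    ext p
    simp [parts_partWithSingletons]
  | succ n ih =>
    obtain ⟨v, hv⟩ : (univ \ T).Nonempty := card_pos.1 (by omega)
    refine (ih (insert v T) (insert_nonempty v T) ?_).tail
      (splitStep_partWithSingletons_insert G (mem_sdiff.1 hv).2 hT)
    rw [sdiff_insert, card_erase_of_mem hv, hn, Nat.add_sub_cancel]

end PartWithSingletons

/-- For a finite complete multipartite graph `G` and
`2 ≤ s ≤ |V(G)|`, the maximum of `|E(P,G)|` over partitions of `V(G)` into
exactly `s` parts is achieved by a partition `P₀` obtained from the trivial
partition `{V(G)}` by `s - 1` successive splitting steps, each removing one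
vertex from a currently largest part (measured by the number of non-crossing
edges it induces) to form a new singleton part. (Since each splitting step
increases the number of parts by one, reaching `s` parts from the trivial
partition takes exactly `s - 1` steps.) -/
theorem stmt17 {V : Type} [Fintype V] [Nonempty V] (G : SimpleGraph V)
    (hG : ∃ (ι : Type) (f : V → ι), ∀ u v, G.Adj u v ↔ f u ≠ f v)
    (s : ℕ) (hs2 : 2 ≤ s) (hsn : s ≤ Fintype.card V) :
    ∃ P₀ : Finpartition (Finset.univ : Finset V),
      Relation.ReflTransGen (SplitStep G)
        (Finpartition.indiscrete (Finset.univ_nonempty.ne_empty)) P₀ ∧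
      P₀.parts.card = s ∧
      ∀ P : Finpartition (Finset.univ : Finset V), P.parts.card = s →
        (edgesNonCrossing G P).card ≤ (edgesNonCrossing G P₀).card := by
  obtain ⟨ι, f, hf⟩ := hG
  have hG : G.IsCompleteMultipartite := ⟨fun u v w huv hvw => by simp_all⟩
  obtain ⟨T₀, hT₀, hmax⟩ := exists_max_image (powersetCard (Fintype.card V + 1 - s) univ)
    (edgesWithin G) (powersetCard_nonempty.2 (by rw [card_univ]; omega))
  rw [mem_powersetCard] at hT₀
  have hT₀ne : T₀.Nonempty := card_pos.1 (by omega)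
  refine ⟨partWithSingletons T₀ hT₀ne,
    reflTransGen_splitStep_partWithSingletons G T₀ hT₀ne, ?_, fun P hP => ?_⟩
  · have := card_parts_partWithSingletons T₀ hT₀ne
    omega
  · obtain ⟨T, hT, hle⟩ := hG.exists_card_edgesNonCrossing_le P
    rw [card_edgesNonCrossing_partWithSingletons]
    exact hle.trans (hmax T (mem_powersetCard.2 ⟨subset_univ T, by omega⟩))
end
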